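/- arXiv:0704.1313 — 4 statements merged into one kernel-verified Lean document; each statement's English description precedes it below -/
import Mathlib

section
/- If a graph has an odd number of vertices, then its adjacency matrix over the field with two elements is degenerate (has determinant zero). -/
/-!
In characteristic two the signs in the Leibniz expansion disappear, so
`det M = ∑ σ, ∏ i, M (σ i) i`. For a symmetric `M` the terms of `σ` and `σ⁻¹` coincide and
cancel in pairs, leaving the terms of the involutions. An involution of a set of odd size has a
fixed point `i`, and then its term contains the diagonal entry `M i i = 0`.
-/

/- The adjacency matrix of a simple graph over the field `ZMod 2`:
entry `(i, j)` is `1` if `i` and `j` are adjacent and `0` otherwise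
(in particular, all diagonal entries are `0`). -/
open Classical in
noncomputable def adjM {V : Type} [Fintype V] [DecidableEq V] (G : SimpleGraph V) :
    Matrix V V (ZMod 2) :=
  fun i j => if G.Adj i j then 1 else 0

open Equiv Finset

namespace Matrix

variable {n R : Type*} [Fintype n]

theorem det_eq_sum_prod_of_charTwo [DecidableEq n] [CommRing R] [CharP R 2] (M : Matrix n n R) :
    M.det = ∑ σ : Perm n, ∏ i, M (σ i) i := by
  rw [det_apply']
  refine sum_congr rfl fun σ _ => ?_
  rcases Int.units_eq_one_or (Perm.sign σ) with h | h <;> simp [h, CharTwo.neg_eq]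

theorem IsSymm.prod_perm_inv [CommMonoid R] {M : Matrix n n R} (hM : M.IsSymm) (σ : Perm n) :
    ∏ i, M (σ⁻¹ i) i = ∏ i, M (σ i) i :=
  calc ∏ i, M (σ⁻¹ i) i = ∏ i, M (σ⁻¹ (σ i)) (σ i) := (Equiv.prod_comp σ _).symm
    _ = ∏ i, M (σ i) i := by simp [hM.apply]

theorem prod_perm_eq_zero_of_sq_eq_one [CommMonoidWithZero R] {M : Matrix n n R}
    (hdiag : ∀ i, M i i = 0) (hn : Odd (Fintype.card n)) {σ : Perm n} (hσ : σ ^ 2 = 1) :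
    ∏ i, M (σ i) i = 0 := by
  obtain ⟨i, hi⟩ := Perm.exists_fixed_point_of_prime (p := 2) (n := 1) hn.not_two_dvd_nat
    (by rwa [pow_one])
  exact prod_eq_zero (mem_univ i) (by rw [hi, hdiag])

theorem det_eq_zero_of_isSymm_of_odd_card [DecidableEq n] [CommRing R] [CharP R 2]
    {M : Matrix n n R} (hM : M.IsSymm) (hdiag : ∀ i, M i i = 0) (hn : Odd (Fintype.card n)) :
    M.det = 0 := by
  rw [det_eq_sum_prod_of_charTwo]
  refine sum_ninvolution (fun σ => σ⁻¹) (fun σ => ?_) (fun σ hσ hinv => hσ ?_)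
    (fun _ => mem_univ _) inv_inv
  · rw [hM.prod_perm_inv, CharTwo.add_self_eq_zero]
  · exact prod_perm_eq_zero_of_sq_eq_one hdiag hn
      ((sq σ).trans (mul_eq_one_iff_eq_inv.mpr hinv.symm))

end Matrix

section adjM

variable {V : Type} [Fintype V] [DecidableEq V] (G : SimpleGraph V)

theorem isSymm_adjM : (adjM G).IsSymm :=
  Matrix.IsSymm.ext fun i j => by
    unfold adjM
    congr 1
    exact propext (G.adj_comm j i)

theorem adjM_apply_self (i : V) : adjM G i i = 0 := by
  simp [adjM]

end adjM

/-- If a graph has an odd number of vertices, then its adjacency matrix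
over the field with two elements is degenerate (has determinant zero). -/
theorem adjacency_matrix_degenerate_of_odd_card (n : ℕ) (hn : Odd n)
    (G : SimpleGraph (Fin n)) : (adjM G).det = 0 :=
  Matrix.det_eq_zero_of_isSymm_of_odd_card (isSymm_adjM G) (adjM_apply_self G)
    (by rwa [Fintype.card_fin])
end

section
/- The nondegeneracy of the adjacency matrix of a graph over ℤ/2ℤ is invariant under the local complementation-type move G ↦ G̃_{AB}: for any graph G and ordered pair of distinct vertices A, B, the adjacency matrix of G is nondegenerate if and only if the adjacency matrix of G̃_{AB} is nondegenerate. -/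
/- `tilde G A B` is the graph `G̃_{AB}` obtained from `G` by switching the adjacency to `A`
of every vertex `v ∉ {A, B}` that is adjacent to `B`; all other adjacencies (including the
one between `A` and `B`) are unchanged. -/
def tilde {V : Type} (G : SimpleGraph V) (A B : V) : SimpleGraph V where
  Adj x y := Xor' (G.Adj x y)
    ((x = A ∧ y ≠ A ∧ y ≠ B ∧ G.Adj y B) ∨ (y = A ∧ x ≠ A ∧ x ≠ B ∧ G.Adj x B))
  symm := by
    constructor
    intro x y h
    have hxy : G.Adj x y ↔ G.Adj y x := ⟨fun h => h.symm, fun h => h.symm⟩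
    unfold Xor' Xor at h ⊢
    tauto
  loopless := by
    constructor
    intro x h
    have : ¬ G.Adj x x := G.loopless.irrefl x
    unfold Xor' Xor at h
    tauto

open Matrix

section

variable {V : Type}

theorem tilde_adj (G : SimpleGraph V) (A B x y : V) :
    (tilde G A B).Adj x y ↔ Xor (G.Adj x y)
      ((x = A ∧ y ≠ A ∧ y ≠ B ∧ G.Adj y B) ∨ (y = A ∧ x ≠ A ∧ x ≠ B ∧ G.Adj x B)) :=
  Iff.rfl

theorem tilde_adj_of_ne_of_ne (G : SimpleGraph V) {A B i j : V} (hi : i ≠ A) (hj : j ≠ A) :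
    (tilde G A B).Adj i j ↔ G.Adj i j := by
  simp [tilde_adj, hi, hj, xor_def]

theorem tilde_adj_left (G : SimpleGraph V) {A B j : V} (hj : j ≠ A) :
    (tilde G A B).Adj A j ↔ Xor (G.Adj A j) (G.Adj B j) := by
  rcases eq_or_ne j B with rfl | hjB
  · simp [tilde_adj]
  · simp [tilde_adj, hj, hjB, G.adj_comm j B]

theorem ite_xor_eq_add (p q : Prop) [Decidable p] [Decidable q] :
    (if Xor p q then (1 : ZMod 2) else 0) = (if p then 1 else 0) + (if q then 1 else 0) := by
  by_cases hp : p <;> by_cases hq : q <;> simp [hp, hq]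
  decide

section adjM

variable [Fintype V] [DecidableEq V]

theorem adjM_apply (G : SimpleGraph V) (i j : V) [Decidable (G.Adj i j)] :
    adjM G i j = if G.Adj i j then 1 else 0 := by
  unfold adjM; congr

theorem adjM_self (G : SimpleGraph V) (i : V) : adjM G i i = 0 := by
  classical
  simp [adjM_apply]

theorem adjM_comm (G : SimpleGraph V) (i j : V) : adjM G i j = adjM G j i := by
  classical
  simp [adjM_apply, G.adj_comm]

theorem adjM_tilde_left (G : SimpleGraph V) {A B j : V} (hj : j ≠ A) :
    adjM (tilde G A B) A j = adjM G A j + adjM G B j := by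
  classical
  simp only [adjM_apply, tilde_adj_left G hj, ite_xor_eq_add]

theorem adjM_tilde_of_ne_of_ne (G : SimpleGraph V) {A B i j : V} (hi : i ≠ A) (hj : j ≠ A) :
    adjM (tilde G A B) i j = adjM G i j := by
  classical
  simp only [adjM_apply, tilde_adj_of_ne_of_ne G hi hj]

theorem adjM_tilde_eq (G : SimpleGraph V) (A B : V) :
    adjM (tilde G A B) = transvection A B 1 * adjM G * transvection B A 1 := by
  ext i j
  rcases eq_or_ne j A with rfl | hj
  · rw [mul_transvection_apply_same]
    rcases eq_or_ne i j with rfl | hi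
    · simp only [transvection_mul_apply_same, adjM_self, one_mul, zero_add, add_zero,
        adjM_comm G B i, CharTwo.add_self_eq_zero]
    · rw [transvection_mul_apply_of_ne _ _ _ _ hi, transvection_mul_apply_of_ne _ _ _ _ hi,
        one_mul, adjM_comm, adjM_tilde_left G hi, adjM_comm G i, adjM_comm G i B]
  · rw [mul_transvection_apply_of_ne _ _ _ _ hj]
    rcases eq_or_ne i A with rfl | hi
    · rw [transvection_mul_apply_same, adjM_tilde_left G hj, one_mul]
    · rw [transvection_mul_apply_of_ne _ _ _ _ hi, adjM_tilde_of_ne_of_ne G hi hj]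

end adjM

end

/-- The nondegeneracy of the adjacency matrix over `ℤ/2ℤ` is invariant
under the move `G ↦ G̃_{AB}`: for any graph `G` and ordered pair of distinct vertices
`A, B`, the adjacency matrix of `G` is nondegenerate iff that of `G̃_{AB}` is. -/
theorem tilde_preserves_nondegenerate {V : Type} [Fintype V] [DecidableEq V]
    (G : SimpleGraph V) (A B : V) (hAB : A ≠ B) :
    (adjM G).det ≠ 0 ↔ (adjM (tilde G A B)).det ≠ 0 := by
  rw [adjM_tilde_eq, det_mul, det_mul, det_transvection_of_ne A B hAB,
    det_transvection_of_ne B A hAB.symm, one_mul, mul_one]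
end

section
/- A mutation of a chord diagram preserves its intersection graph: if a chord diagram D' is obtained from D by rotating or reflecting a share, then D and D' have isomorphic intersection graphs. -/
/- A chord diagram with `n` chords: a fixed-point-free involution of the `2n` cyclically
ordered points on the circle. -/
structure ChordDiagram (n : ℕ) where
  σ : Equiv.Perm (Fin (2 * n))
  invol : ∀ i, σ (σ i) = i
  nofix : ∀ i, σ i ≠ i

namespace ChordDiagram

variable {n : ℕ}

/- Two chords `{i, σ i}` and `{j, σ j}` intersect (interleave around the circle). -/
def crosses (D : ChordDiagram n) (i j : Fin (2 * n)) : Prop :=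
  (min i (D.σ i) < min j (D.σ j) ∧ min j (D.σ j) < max i (D.σ i) ∧
    max i (D.σ i) < max j (D.σ j)) ∨
  (min j (D.σ j) < min i (D.σ i) ∧ min i (D.σ i) < max j (D.σ j) ∧
    max j (D.σ j) < max i (D.σ i))

lemma crosses_sigma_left (D : ChordDiagram n) (i j : Fin (2 * n)) :
    D.crosses (D.σ i) j ↔ D.crosses i j := by
  unfold crosses
  rw [D.invol i, min_comm (D.σ i) i, max_comm (D.σ i) i]

lemma crosses_sigma_right (D : ChordDiagram n) (i j : Fin (2 * n)) :
    D.crosses i (D.σ j) ↔ D.crosses i j := by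
  unfold crosses
  rw [D.invol j, min_comm (D.σ j) j, max_comm (D.σ j) j]

/- Points of the circle, identified when they are endpoints of the same chord;
the quotient is the set of chords of the diagram. -/
def chordSetoid (D : ChordDiagram n) : Setoid (Fin (2 * n)) where
  r i j := i = j ∨ D.σ i = j
  iseqv := by
    constructor
    · exact fun i => Or.inl rfl
    · rintro i j (rfl | h)
      · exact Or.inl rfl
      · exact Or.inr (by rw [← h, D.invol])
    · rintro i j k (rfl | h) (rfl | h')
      · exact Or.inl rfl
      · exact Or.inr h'
      · exact Or.inr h
      · exact Or.inl (by rw [← h', ← h, D.invol])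

/- The set of chords of a chord diagram. -/
def Chords (D : ChordDiagram n) : Type := Quotient D.chordSetoid

/- The intersection graph (circle graph) of a chord diagram: vertices are the chords,
two chords being adjacent iff they intersect. -/
def interGraph (D : ChordDiagram n) : SimpleGraph D.Chords where
  Adj := Quotient.lift₂ D.crosses (by
    rintro a b a' b' (rfl | ha) (rfl | hb)
    · rfl
    · rw [← hb, crosses_sigma_right]
    · rw [← ha, crosses_sigma_left]
    · rw [← ha, ← hb, crosses_sigma_left, crosses_sigma_right])
  symm := by
    constructor
    rintro ⟨i⟩ ⟨j⟩ h
    exact Or.symm h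
  loopless := by
    constructor
    rintro ⟨i⟩ (h | h) <;> exact absurd h.1 (lt_irrefl _)

/- Conjugation of a chord diagram by a permutation of the points. -/
def conj (D : ChordDiagram n) (μ : Equiv.Perm (Fin (2 * n))) : ChordDiagram n where
  σ := μ * D.σ * μ⁻¹
  invol := by
    intro i
    simp [Equiv.Perm.mul_apply, D.invol]
  nofix := by
    intro i h
    apply D.nofix (μ⁻¹ i)
    have := congrArg (fun z => μ⁻¹ z) h
    simpa using this

end ChordDiagram

namespace ChordDiagram

/- Position of the point `x` relative to the reference point `a` on the circle of
`2n` points (cyclic distance from `a` to `x`). -/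
def relPos (n a x : ℕ) : ℕ := (x + (2 * n - a)) % (2 * n)

/- The underlying point map (in coordinates relative to the start of the share) of the
180-degree rotation of the share consisting of the two arcs `[0, p)` and `[r, r + s)`. -/
def rotFun (p r s x : ℕ) : ℕ :=
  if x < p then x + (r - p) + s
  else if x < r then x + s - p
  else if x < r + s then x - r
  else x

/- The underlying point map (in coordinates relative to the start of the share) of the
reflection of the share consisting of the two arcs `[0, p)` and `[r, r + s)`. -/
def reflFun (p r s x : ℕ) : ℕ :=
  if x < p then p - 1 - x
  else if r ≤ x ∧ x < r + s then r + (r + s - 1 - x)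
  else x

/- `specAt n a f μ` says the permutation `μ` acts, in coordinates relative to the
point `a`, by the map `f`. -/
def specAt (n a : ℕ) (f : ℕ → ℕ) (μ : Equiv.Perm (Fin (2 * n))) : Prop :=
  ∀ x : Fin (2 * n), ((μ x : Fin (2 * n)) : ℕ) = (a + f (relPos n a (x : ℕ))) % (2 * n)

/- Membership in the share consisting (in coordinates relative to `a`) of the two arcs
`[0, p)` and `[r, r + s)`. -/
def inShare (n a p r s : ℕ) (x : Fin (2 * n)) : Prop :=
  relPos n a (x : ℕ) < p ∨ (r ≤ relPos n a (x : ℕ) ∧ relPos n a (x : ℕ) < r + s)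

/- `D'` is obtained from `D` by a mutation: a rotation or a reflection of a share of `D`
(a pair of arcs such that every chord with an endpoint on them has both endpoints on
them). -/
def IsMutation {n : ℕ} (D D' : ChordDiagram n) : Prop :=
  ∃ (a p r s : ℕ) (μ : Equiv.Perm (Fin (2 * n))),
    a < 2 * n ∧ p ≤ r ∧ r + s ≤ 2 * n ∧
    (∀ i, inShare n a p r s i → inShare n a p r s (D.σ i)) ∧
    (specAt n a (rotFun p r s) μ ∨ specAt n a (reflFun p r s) μ) ∧
    D' = D.conj μ

end ChordDiagram

/-!
Whether two chords cross depends only on the relative order of their four endpoints. In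
coordinates starting at the share, the share is the union of the arcs `[0, p)` and
`[r, r + s)`; the rotation swaps these two arcs (shifting the arc `[p, r)` between them) and
the reflection reverses each of them. For chords lying entirely inside or entirely outside the
share, a case analysis on the arcs containing the endpoints shows that crossings survive. A
cyclic shift of the circle is the rotation of the share formed by the whole circle, so passing
to coordinates starting at the share preserves crossings too.
-/

def Interleaved {α : Type*} [LinearOrder α] (w x y z : α) : Prop :=
  (min w x < min y z ∧ min y z < max w x ∧ max w x < max y z) ∨
  (min y z < min w x ∧ min w x < max y z ∧ max y z < max w x)

theorem StrictMono.interleaved_iff {α β : Type*} [LinearOrder α] [LinearOrder β] {f : α → β}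
    (hf : StrictMono f) {w x y z : α} :
    Interleaved (f w) (f x) (f y) (f z) ↔ Interleaved w x y z := by
  simp only [Interleaved, ← hf.monotone.map_min, ← hf.monotone.map_max, hf.lt_iff_lt]

-- Free of `min`/`max` and nearly free of disjunctions, this form keeps the `omega` case
-- analyses below cheap.
theorem Nat.interleaved_iff {w x y z : ℕ} :
    Interleaved w x y z ↔
      w ≠ y ∧ w ≠ z ∧ x ≠ y ∧ x ≠ z ∧ ¬((w < y ↔ x < y) ↔ (w < z ↔ x < z)) := by
  unfold Interleaved
  rcases le_total w x with h | h <;> rcases le_total y z with h' | h' <;>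
    simp only [min_eq_left, min_eq_right, max_eq_left, max_eq_right, h, h'] <;> omega

namespace ChordDiagram

variable {n : ℕ}

def InArcs (p r s u : ℕ) : Prop := u < p ∨ (r ≤ u ∧ u < r + s)

def PreservesInterleaving (S : ℕ → Prop) (f : ℕ → ℕ) : Prop :=
  ∀ w x y z, (S w ↔ S x) → (S y ↔ S z) →
    (Interleaved (f w) (f x) (f y) (f z) ↔ Interleaved w x y z)

section ShareMaps

variable {p r s : ℕ}

lemma rotFun_cases (hpr : p ≤ r) (u : ℕ) :
    (InArcs p r s u ∧ ((u < p ∧ rotFun p r s u + p = u + r + s) ∨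
      (r ≤ u ∧ u < r + s ∧ rotFun p r s u + r = u))) ∨
    (¬ InArcs p r s u ∧ ((p ≤ u ∧ u < r ∧ rotFun p r s u + p = u + s) ∨
      (r + s ≤ u ∧ rotFun p r s u = u))) := by
  unfold rotFun InArcs
  split_ifs <;> omega

lemma reflFun_cases (hpr : p ≤ r) (u : ℕ) :
    (InArcs p r s u ∧ ((u < p ∧ reflFun p r s u + u + 1 = p) ∨
      (r ≤ u ∧ u < r + s ∧ reflFun p r s u + u + 1 = 2 * r + s))) ∨
    (¬ InArcs p r s u ∧ p ≤ u ∧ (u < r ∨ r + s ≤ u) ∧ reflFun p r s u = u) := by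
  unfold reflFun InArcs
  split_ifs <;> omega

lemma rotFun_lt {N : ℕ} (hpr : p ≤ r) (hrs : r + s ≤ N) {u : ℕ} (hu : u < N) :
    rotFun p r s u < N := by
  unfold rotFun
  split_ifs <;> omega

lemma reflFun_lt {N : ℕ} (hpr : p ≤ r) (hrs : r + s ≤ N) {u : ℕ} (hu : u < N) :
    reflFun p r s u < N := by
  unfold reflFun
  split_ifs <;> omega

set_option maxHeartbeats 400000 in
theorem preservesInterleaving_rotFun (hpr : p ≤ r) :
    PreservesInterleaving (InArcs p r s) (rotFun p r s) := by
  intro w x y z hwx hyz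
  rw [Nat.interleaved_iff, Nat.interleaved_iff]
  rcases rotFun_cases (s := s) hpr w with ⟨iw, hw | hw⟩ | ⟨iw, hw | hw⟩ <;>
  rcases rotFun_cases (s := s) hpr x with ⟨ix, hx | hx⟩ | ⟨ix, hx | hx⟩ <;>
  simp only [iw, ix, iff_true, iff_false, not_true] at hwx <;>
  rcases rotFun_cases (s := s) hpr y with ⟨iy, hy | hy⟩ | ⟨iy, hy | hy⟩ <;>
  rcases rotFun_cases (s := s) hpr z with ⟨iz, hz | hz⟩ | ⟨iz, hz | hz⟩ <;>
  simp only [iy, iz, iff_true, iff_false, not_true] at hyz <;>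
  omega

theorem preservesInterleaving_reflFun (hpr : p ≤ r) :
    PreservesInterleaving (InArcs p r s) (reflFun p r s) := by
  intro w x y z hwx hyz
  rw [Nat.interleaved_iff, Nat.interleaved_iff]
  rcases reflFun_cases (s := s) hpr w with ⟨iw, hw | hw⟩ | ⟨iw, hw⟩ <;>
  rcases reflFun_cases (s := s) hpr x with ⟨ix, hx | hx⟩ | ⟨ix, hx⟩ <;>
  simp only [iw, ix, iff_true, iff_false, not_true] at hwx <;>
  rcases reflFun_cases (s := s) hpr y with ⟨iy, hy | hy⟩ | ⟨iy, hy⟩ <;>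
  rcases reflFun_cases (s := s) hpr z with ⟨iz, hz | hz⟩ | ⟨iz, hz⟩ <;>
  simp only [iy, iz, iff_true, iff_false, not_true] at hyz <;>
  omega

end ShareMaps

lemma add_mod_eq_rotFun {N b u : ℕ} (hb : b ≤ N) (hu : u < N) :
    (b + u) % N = rotFun (N - b) (N - b) b u := by
  unfold rotFun
  split_ifs
  · rw [Nat.mod_eq_of_lt (by omega)]
    omega
  · rw [Nat.mod_eq_sub_mod (by omega), Nat.mod_eq_of_lt (by omega)]
    omega
  · omega

theorem interleaved_add_mod_iff {N a w x y z : ℕ} (hw : w < N) (hx : x < N) (hy : y < N)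
    (hz : z < N) :
    Interleaved ((a + w) % N) ((a + x) % N) ((a + y) % N) ((a + z) % N) ↔
      Interleaved w x y z := by
  have hb : a % N ≤ N := (Nat.mod_lt a (by omega)).le
  have hall {u : ℕ} (hu : u < N) : InArcs (N - a % N) (N - a % N) (a % N) u := by
    unfold InArcs
    omega
  simp only [← Nat.mod_add_mod a, add_mod_eq_rotFun hb, hw, hx, hy, hz]
  exact preservesInterleaving_rotFun le_rfl w x y z (iff_of_true (hall hw) (hall hx))
    (iff_of_true (hall hy) (hall hz))

theorem interleaved_relPos_iff {a w x y z : ℕ} (hw : w < 2 * n) (hx : x < 2 * n)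
    (hy : y < 2 * n) (hz : z < 2 * n) :
    Interleaved (relPos n a w) (relPos n a x) (relPos n a y) (relPos n a z) ↔
      Interleaved w x y z := by
  simp only [relPos, add_comm _ (2 * n - a)]
  exact interleaved_add_mod_iff hw hx hy hz

theorem crosses_iff_interleaved (D : ChordDiagram n) (i j : Fin (2 * n)) :
    D.crosses i j ↔ Interleaved (i : ℕ) (D.σ i) (j : ℕ) (D.σ j) :=
  Fin.val_strictMono.interleaved_iff.symm

lemma conj_sigma_apply (D : ChordDiagram n) (μ : Equiv.Perm (Fin (2 * n))) (i : Fin (2 * n)) :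
    (D.conj μ).σ (μ i) = μ (D.σ i) := by
  simp [conj, Equiv.Perm.mul_apply]

lemma inArcs_relPos_sigma_iff (D : ChordDiagram n) {a p r s : ℕ}
    (hcl : ∀ i, inShare n a p r s i → inShare n a p r s (D.σ i)) (i : Fin (2 * n)) :
    InArcs p r s (relPos n a i) ↔ InArcs p r s (relPos n a (D.σ i)) :=
  ⟨hcl i, fun h => D.invol i ▸ hcl (D.σ i) h⟩

theorem crosses_conj_iff_of_specAt (D : ChordDiagram n) {a p r s : ℕ} {f : ℕ → ℕ}
    {μ : Equiv.Perm (Fin (2 * n))} (hf_lt : ∀ u < 2 * n, f u < 2 * n)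
    (hf : PreservesInterleaving (InArcs p r s) f)
    (hcl : ∀ i, inShare n a p r s i → inShare n a p r s (D.σ i)) (hμ : specAt n a f μ)
    (i j : Fin (2 * n)) :
    (D.conj μ).crosses (μ i) (μ j) ↔ D.crosses i j := by
  have hrel (x : Fin (2 * n)) : relPos n a x < 2 * n := Nat.mod_lt _ x.pos
  rw [crosses_iff_interleaved, crosses_iff_interleaved, conj_sigma_apply, conj_sigma_apply,
    hμ i, hμ j, hμ (D.σ i), hμ (D.σ j),
    interleaved_add_mod_iff (hf_lt _ (hrel _)) (hf_lt _ (hrel _)) (hf_lt _ (hrel _))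
      (hf_lt _ (hrel _)),
    hf _ _ _ _ (D.inArcs_relPos_sigma_iff hcl i) (D.inArcs_relPos_sigma_iff hcl j)]
  exact interleaved_relPos_iff i.isLt (D.σ i).isLt j.isLt (D.σ j).isLt

def interGraphIsoConj (D : ChordDiagram n) (μ : Equiv.Perm (Fin (2 * n)))
    (hμ : ∀ i j, (D.conj μ).crosses (μ i) (μ j) ↔ D.crosses i j) :
    D.interGraph ≃g (D.conj μ).interGraph where
  toEquiv := Quotient.congr μ fun i j => by
    change i = j ∨ D.σ i = j ↔ μ i = μ j ∨ (D.conj μ).σ (μ i) = μ j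
    rw [conj_sigma_apply, μ.injective.eq_iff, μ.injective.eq_iff]
  map_rel_iff' := by
    rintro ⟨i⟩ ⟨j⟩
    exact hμ i j

end ChordDiagram

/-- A mutation of a chord diagram (rotation or reflection of a share)
preserves the intersection graph: the mutated diagram has an isomorphic intersection
graph. -/
theorem interGraph_iso_of_mutation {n : ℕ} (D D' : ChordDiagram n)
    (h : ChordDiagram.IsMutation D D') :
    Nonempty (D.interGraph ≃g D'.interGraph) := by
  obtain ⟨a, p, r, s, μ, -, hpr, hrs, hcl, hμ, rfl⟩ := h
  refine ⟨D.interGraphIsoConj μ fun i j => ?_⟩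
  rcases hμ with hrot | hrefl
  · exact D.crosses_conj_iff_of_specAt (fun _ => ChordDiagram.rotFun_lt hpr hrs)
      (ChordDiagram.preservesInterleaving_rotFun hpr) hcl hrot i j
  · exact D.crosses_conj_iff_of_specAt (fun _ => ChordDiagram.reflFun_lt hpr hrs)
      (ChordDiagram.preservesInterleaving_reflFun hpr) hcl hrefl i j
end

section
/- The Whitney twist preserves the cycle matroid: if a graph G is obtained from disjoint graphs G₁, G₂ by identifying u₁ with u₂ and v₁ with v₂ (u₁,v₁ ∈ G₁, u₂,v₂ ∈ G₂), and G' is obtained by identifying u₁ with v₂ and v₁ with u₂, then G and G' have isomorphic cycle matroids (via the identity map on edges). -/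
/- The vertex map from `V₂` into the vertex set of the graph obtained by gluing `G₂` to
`G₁` along `u₂ ↦ α` and `v₂ ↦ β` (`α, β ∈ V₁`); the remaining vertices of `V₂` keep
their identity. -/
open Classical in
noncomputable def glueMap₂ {V₁ V₂ : Type} (u₂ v₂ : V₂) (α β : V₁) :
    V₂ → V₁ ⊕ {w : V₂ // w ≠ u₂ ∧ w ≠ v₂} := fun w =>
  if h : w = u₂ then .inl α
  else if h' : w = v₂ then .inl β
  else .inr ⟨w, ⟨h, h'⟩⟩

/- The inclusion of `V₁` into the glued vertex set. -/
def inclMap {V₁ V₂ : Type} (u₂ v₂ : V₂) :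
    V₁ → V₁ ⊕ {w : V₂ // w ≠ u₂ ∧ w ≠ v₂} := Sum.inl

/-! Write the untwisted graph as `A ⊔ B`, where the supports of `A` and `B` meet only in the
gluing vertices `a, b`; the twisted graph is then `A ⊔ B'` with `B' = B.comap (Equiv.swap a b)`.
A graph is acyclic iff each of its edges is a bridge. A walk in `A ⊔ B'` between vertices that
are not inner vertices of `B` alternates between `A`-segments and `B'`-segments whose ends lie
in `{a, b}`, and `B'` connects two vertices of `{a, b}` exactly when `B` does. Hence an edge of
`A` that is a bridge of `A ⊔ B` is a bridge of `A ⊔ B'`. Edges of `B'` reduce to this case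
through the isomorphism `Equiv.swap a b` between `A ⊔ B'` and `B ⊔ A.comap (Equiv.swap a b)`. -/

lemma Sym2.map_swap_mk_eq_self {V : Type*} [DecidableEq V] {a b x y : V} (hxy : x ≠ y)
    (hx : x ∈ ({a, b} : Set V)) (hy : y ∈ ({a, b} : Set V)) :
    Sym2.map (Equiv.swap a b) s(x, y) = s(x, y) := by
  rcases hx with rfl | rfl <;> rcases hy with rfl | rfl <;> simp_all [Sym2.eq_swap]

namespace SimpleGraph

variable {V W : Type*}

theorem Reachable.of_sup_of_support_subset {A B H : SimpleGraph V} {N : Set V}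
    (hAH : A ≤ H) (hAN : A.support ⊆ N)
    (hB : ∀ p ∈ N, ∀ q ∈ N, B.Reachable p q → H.Reachable p q)
    {x y : V} (hx : x ∈ N) (hy : y ∈ N) (h : (A ⊔ B).Reachable x y) : H.Reachable x y := by
  suffices ∀ {z : V}, (A ⊔ B).Walk z y → ∃ c ∈ N, B.Reachable z c ∧ H.Reachable c y by
    obtain ⟨c, hc, hxc, hcy⟩ := this h.some
    exact (hB x hx c hc hxc).trans hcy
  clear h
  intro z w
  induction w with
  | nil => exact ⟨_, hy, .rfl, .rfl⟩
  | cons hadj _ ih =>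
    obtain ⟨c, hc, hzc, hcy⟩ := ih hy
    rcases hadj with hadj | hadj
    · exact ⟨_, hAN hadj.mem_support_left, .rfl, (hAH hadj).reachable.trans
        ((hB _ (hAN hadj.mem_support_right) c hc hzc).trans hcy)⟩
    · exact ⟨c, hc, hadj.reachable.trans hzc, hcy⟩

lemma comap_sup (G H : SimpleGraph W) (f : V → W) :
    (G ⊔ H).comap f = G.comap f ⊔ H.comap f := rfl

lemma comap_deleteEdges {G : SimpleGraph W} {f : V → W} (hf : f.Injective) (s : Set (Sym2 V)) :
    (G.comap f).deleteEdges s = (G.deleteEdges (Sym2.map f '' s)).comap f := by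
  ext p q
  simp only [deleteEdges_adj, comap_adj, ← Sym2.map_mk, (Sym2.map.injective hf).mem_set_image]

lemma isBridge_comap_iff {G : SimpleGraph W} (σ : V ≃ W) {x y : V} :
    (G.comap σ).IsBridge s(x, y) ↔ G.IsBridge s(σ x, σ y) := by
  rw [isBridge_iff, isBridge_iff, comap_deleteEdges σ.injective, Set.image_singleton,
    Sym2.map_mk]
  exact not_congr (Iso.reachable_iff (φ := Iso.comap σ _)).symm

lemma fromEdgeSet_image_map_equiv (σ : V ≃ W) (s : Set (Sym2 V)) :
    fromEdgeSet (Sym2.map σ '' s) = (fromEdgeSet s).comap σ.symm := by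
  ext p q
  rw [fromEdgeSet_adj, comap_adj, fromEdgeSet_adj, σ.symm.injective.ne_iff,
    ← (Sym2.map.injective σ.injective).mem_set_image, Sym2.map_mk, σ.apply_symm_apply,
    σ.apply_symm_apply]

lemma support_fromEdgeSet_image_subset (f : V → W) (s : Set (Sym2 V)) :
    (fromEdgeSet (Sym2.map f '' s)).support ⊆ Set.range f := by
  rintro z ⟨w, ⟨t, -, ht⟩, -⟩
  obtain ⟨c, -, rfl⟩ := Sym2.mem_map.mp (ht ▸ Sym2.mem_mk_left z w)
  exact ⟨c, rfl⟩

section Swap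

variable [DecidableEq V] {A B : SimpleGraph V} {a b : V}

lemma comap_swap_comap_swap (G : SimpleGraph V) :
    (G.comap (Equiv.swap a b)).comap (Equiv.swap a b) = G := by
  ext; simp

lemma support_comap_swap_subset (B : SimpleGraph V) :
    (B.comap (Equiv.swap a b)).support ⊆ B.support ∪ {a, b} := by
  intro z hz
  by_cases hza : z = a
  · exact Or.inr (Or.inl hza)
  by_cases hzb : z = b
  · exact Or.inr (Or.inr hzb)
  have hz' := support_comap_subset (Equiv.swap a b) B hz
  rw [Set.mem_preimage, Equiv.swap_apply_of_ne_of_ne hza hzb] at hz'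
  exact Or.inl hz'

lemma support_inter_comap_swap_subset (hs : A.support ∩ B.support ⊆ {a, b}) :
    A.support ∩ (B.comap (Equiv.swap a b)).support ⊆ {a, b} := by
  rintro z ⟨hzA, hzB⟩
  rcases support_comap_swap_subset B hzB with hzB | hz
  exacts [hs ⟨hzA, hzB⟩, hz]

lemma reachable_of_reachable_comap_swap {p q : V} (hp : p ∈ B.support → p = a ∨ p = b)
    (hq : q ∈ B.support → q = a ∨ q = b) (h : (B.comap (Equiv.swap a b)).Reachable p q) :
    B.Reachable p q := by
  by_cases hpq : p = q
  · exact hpq ▸ .rfl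
  have hσ := h.map (Iso.comap (Equiv.swap a b) B).toHom
  have mem_pair : ∀ {z}, z ∈ (B.comap (Equiv.swap a b)).support →
      (z ∈ B.support → z = a ∨ z = b) → z = a ∨ z = b := fun hz hzB ↦
    (support_comap_swap_subset B hz).elim hzB id
  rcases mem_pair (mem_support_of_reachable hpq h) hp with rfl | rfl <;>
    rcases mem_pair (mem_support_of_reachable (Ne.symm hpq) h.symm) hq with rfl | rfl
  all_goals simp_all [reachable_comm]

lemma Reachable.of_sup_comap_swap (hs : A.support ∩ B.support ⊆ {a, b}) {x y : V}
    (hx : x ∈ B.support → x = a ∨ x = b) (hy : y ∈ B.support → y = a ∨ y = b)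
    (h : (A ⊔ B.comap (Equiv.swap a b)).Reachable x y) : (A ⊔ B).Reachable x y :=
  h.of_sup_of_support_subset (N := {z | z ∈ B.support → z = a ∨ z = b}) le_sup_left
    (fun _ hzA hzB ↦ hs ⟨hzA, hzB⟩)
    (fun _ hp _ hq hpq ↦ (reachable_of_reachable_comap_swap hp hq hpq).mono le_sup_right) hx hy

lemma isBridge_sup_comap_swap_of_adj (hs : A.support ∩ B.support ⊆ {a, b})
    (hac : (A ⊔ B).IsAcyclic) {x y : V} (hxy : A.Adj x y) :
    (A ⊔ B.comap (Equiv.swap a b)).IsBridge s(x, y) := by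
  set e := s(x, y)
  set e' := Sym2.map (Equiv.swap a b) e
  rw [isBridge_iff]
  intro hr
  rw [deleteEdges_sup, comap_deleteEdges (Equiv.injective _), Set.image_singleton] at hr
  have hs' : (A.deleteEdges {e}).support ∩ (B.deleteEdges {e'}).support ⊆ {a, b} :=
    (Set.inter_subset_inter (support_mono (deleteEdges_le _))
      (support_mono (deleteEdges_le _))).trans hs
  -- an edge shared by `A` and `B` joins `a` and `b`, so the swap fixes it
  have hfix : {e} ∩ B.edgeSet ⊆ {e'} := by
    rintro _ ⟨rfl, he⟩
    exact (Sym2.map_swap_mk_eq_self hxy.ne (hs ⟨hxy.mem_support_left, he.mem_support_left⟩)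
      (hs ⟨hxy.mem_support_right, he.mem_support_right⟩)).symm
  have hr' := hr.of_sup_comap_swap hs'
    (fun h ↦ hs ⟨hxy.mem_support_left, support_mono (deleteEdges_le _) h⟩)
    (fun h ↦ hs ⟨hxy.mem_support_right, support_mono (deleteEdges_le _) h⟩)
  refine isBridge_iff.mp (isAcyclic_iff_forall_adj_isBridge.mp hac (Or.inl hxy)) (hr'.mono ?_)
  rw [deleteEdges_sup, B.deleteEdges_eq_inter_edgeSet {e}]
  exact sup_le_sup_left (deleteEdges_anti hfix) _

theorem IsAcyclic.sup_comap_swap (hs : A.support ∩ B.support ⊆ {a, b})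
    (hac : (A ⊔ B).IsAcyclic) : (A ⊔ B.comap (Equiv.swap a b)).IsAcyclic := by
  rw [isAcyclic_iff_forall_adj_isBridge]
  rintro x y (hxy | hxy)
  · exact isBridge_sup_comap_swap_of_adj hs hac hxy
  · have h := isBridge_sup_comap_swap_of_adj (Set.inter_comm A.support _ ▸ hs)
      (sup_comm A B ▸ hac) (show B.Adj (Equiv.swap a b x) (Equiv.swap a b y) from hxy)
    rwa [← isBridge_comap_iff, comap_sup, comap_swap_comap_swap, sup_comm] at h

theorem isAcyclic_sup_comap_swap_iff (hs : A.support ∩ B.support ⊆ {a, b}) :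
    (A ⊔ B).IsAcyclic ↔ (A ⊔ B.comap (Equiv.swap a b)).IsAcyclic := by
  refine ⟨IsAcyclic.sup_comap_swap hs, fun h ↦ ?_⟩
  simpa only [comap_swap_comap_swap] using h.sup_comap_swap (support_inter_comap_swap_subset hs)

end Swap

end SimpleGraph

lemma glueMap₂_swap {V₁ V₂ : Type} [DecidableEq V₁] [DecidableEq V₂] (u₂ v₂ : V₂)
    (α β : V₁) :
    glueMap₂ u₂ v₂ β α = Equiv.swap (Sum.inl α) (Sum.inl β) ∘ glueMap₂ u₂ v₂ α β := by
  funext w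
  by_cases hu : w = u₂
  · simp [glueMap₂, hu]
  by_cases hv : w = v₂
  · subst hv
    simp [glueMap₂, hu]
  · simp [glueMap₂, hu, hv, Equiv.swap_apply_of_ne_of_ne]

lemma eq_of_glueMap₂_eq_inl {V₁ V₂ : Type} {u₂ v₂ : V₂} {α β c : V₁} {w : V₂}
    (h : glueMap₂ u₂ v₂ α β w = Sum.inl c) : c = α ∨ c = β := by
  unfold glueMap₂ at h
  split_ifs at h <;> simp_all

open SimpleGraph

theorem whitney_twist_cycle_matroid_general {V₁ V₂ : Type}
    (u₁ v₁ : V₁) (u₂ v₂ : V₂)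
    (S₁ : Set (Sym2 V₁))
    (S₂ : Set (Sym2 V₂)) :
    (SimpleGraph.fromEdgeSet
        (Sym2.map (inclMap u₂ v₂) '' S₁ ∪ Sym2.map (glueMap₂ u₂ v₂ u₁ v₁) '' S₂)).IsAcyclic ↔
    (SimpleGraph.fromEdgeSet
        (Sym2.map (inclMap u₂ v₂) '' S₁ ∪ Sym2.map (glueMap₂ u₂ v₂ v₁ u₁) '' S₂)).IsAcyclic := by
  classical
  have hs : (fromEdgeSet (Sym2.map (inclMap u₂ v₂) '' S₁)).support ∩
      (fromEdgeSet (Sym2.map (glueMap₂ u₂ v₂ u₁ v₁) '' S₂)).support ⊆ {.inl u₁, .inl v₁} := by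
    rintro _ ⟨h₁, h₂⟩
    obtain ⟨c, rfl⟩ := support_fromEdgeSet_image_subset _ _ h₁
    obtain ⟨w, hw⟩ := support_fromEdgeSet_image_subset _ _ h₂
    rcases eq_of_glueMap₂_eq_inl hw with rfl | rfl
    exacts [Or.inl rfl, Or.inr rfl]
  rw [fromEdgeSet_union, fromEdgeSet_union, glueMap₂_swap u₂ v₂ u₁ v₁, Sym2.map_comp,
    Set.image_comp, fromEdgeSet_image_map_equiv, Equiv.symm_swap]
  exact isAcyclic_sup_comap_swap_iff hs

/-- The Whitney twist preserves the cycle matroid.  Let `G` be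
obtained from disjoint graphs `G₁`, `G₂` by identifying `u₁` with `u₂` and `v₁` with
`v₂`, and `G'` by identifying `u₁` with `v₂` and `v₁` with `u₂`.  Then, under the
identity identification of the edges (each edge coming from an edge of `G₁` or of
`G₂`), a set of edges is independent (acyclic) in `G` iff it is in `G'`: the two cycle
matroids are isomorphic via the identity map on edges. -/
theorem whitney_twist_cycle_matroid {V₁ V₂ : Type}
    (G₁ : SimpleGraph V₁) (G₂ : SimpleGraph V₂)
    (u₁ v₁ : V₁) (u₂ v₂ : V₂) (h₁ : u₁ ≠ v₁) (h₂ : u₂ ≠ v₂)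
    (S₁ : Set (Sym2 V₁)) (hS₁ : S₁ ⊆ G₁.edgeSet)
    (S₂ : Set (Sym2 V₂)) (hS₂ : S₂ ⊆ G₂.edgeSet) :
    (SimpleGraph.fromEdgeSet
        (Sym2.map (inclMap u₂ v₂) '' S₁ ∪ Sym2.map (glueMap₂ u₂ v₂ u₁ v₁) '' S₂)).IsAcyclic ↔
    (SimpleGraph.fromEdgeSet
        (Sym2.map (inclMap u₂ v₂) '' S₁ ∪ Sym2.map (glueMap₂ u₂ v₂ v₁ u₁) '' S₂)).IsAcyclic :=
  whitney_twist_cycle_matroid_general u₁ v₁ u₂ v₂ S₁ S₂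
end
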